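/- There exists a universal constant C > 0 such that for every η > 0 there is N with the following property for all n ≥ N. Set m_n := ⌈√(n/(η² ln n))⌉. Let A ⊆ [0,1]² be a Boolean combination of at most 1000 halfdisks, each of radius at most 1000·√(ln n / n), and let A' be the union of all cells of the dissection D(m_n) that are entirely contained in A. Then area(A') ≥ area(A) − C · η · (ln n / n). -/

import Mathlib

open MeasureTheory Real Metric
open scoped ENNReal

/-- The Euclidean plane. -/
abbrev Plane : Type := EuclideanSpace ℝ (Fin 2)

/-- The unit square `[0,1]²`. -/
def unitSquare : Set Plane :=
  {p | p 0 ∈ Set.Icc (0 : ℝ) 1 ∧ p 1 ∈ Set.Icc (0 : ℝ) 1}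

/-- The cell `c_{i,j} = [i/m, (i+1)/m] × [j/m, (j+1)/m]` of the dissection `D(m)`. -/
def cell (m i j : ℕ) : Set Plane :=
  {p | p 0 ∈ Set.Icc ((i : ℝ) / m) ((i + 1 : ℕ) / m) ∧
       p 1 ∈ Set.Icc ((j : ℝ) / m) ((j + 1 : ℕ) / m)}

/-- The side count `m_n = ⌈√(n/(η² ln n))⌉` of the dissection. -/
noncomputable def mOf (η : ℝ) (n : ℕ) : ℕ :=
  ⌈Real.sqrt (n / (η ^ 2 * Real.log n))⌉₊

/-- `D` is a halfdisk of radius at most `ρmax`: the intersection of a closed ball with a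
closed halfplane whose boundary line passes through the centre of the ball. -/
def IsHalfdisk (ρmax : ℝ) (D : Set Plane) : Prop :=
  ∃ (x : Plane) (ρ : ℝ) (v : Plane), 0 ≤ ρ ∧ ρ ≤ ρmax ∧ v ≠ 0 ∧
    D = closedBall x ρ ∩ {p : Plane | (inner ℝ v (p - x) : ℝ) ≤ 0}

/-- The union of all cells of `D(m)` entirely contained in `A`. -/
def innerCells (m : ℕ) (A : Set Plane) : Set Plane :=
  ⋃ i ∈ Finset.range m, ⋃ j ∈ Finset.range m, ⋃ (_ : cell m i j ⊆ A), cell m i j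

/-! A point of `A` not covered by inner cells lies in a cell meeting both `A` and its
complement; cells are connected, so that cell meets `∂A`, and `A \ A'` lies in the
`2/m`-thickening of `∂A ⊆ ⋃ᵢ ∂Dᵢ`. The frontier of a halfdisk of radius `ρ` is contained in a
circle and a diameter, whose `δ`-thickenings have area `O(ρδ + δ²)`. With `δ = 2/m ≤ 2η√(ln n/n)`
and `ρ ≤ 1000√(ln n/n)` this is `O(η ln n/n)` for `η ≤ 1`. For `η > 1` the trivial bound
suffices: being bounded, `A` lies in `⋃ᵢ Dᵢ`, whose area is `O(ln n/n)`. -/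

open Set Module

section Frontier

variable {X : Type*} [TopologicalSpace X]

theorem IsPreconnected.inter_frontier_nonempty {s t : Set X} (hs : IsPreconnected s)
    (hst : (s ∩ t).Nonempty) (hs_t : (s \ t).Nonempty) : (s ∩ frontier t).Nonempty := by
  by_contra! h
  have hclosure : ∀ p ∈ s, p ∈ closure t → p ∈ interior t := fun p hp hc =>
    by_contra fun hi => h.subset ⟨hp, hc, hi⟩
  have hcover : s ⊆ interior t ∪ interior tᶜ := fun p hp => by
    rw [interior_compl]
    by_cases hc : p ∈ closure t
    · exact Or.inl (hclosure p hp hc)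
    · exact Or.inr hc
  obtain ⟨p, hps, hpt⟩ := hst
  obtain ⟨q, hqs, hqt⟩ := hs_t
  have hq : q ∈ interior tᶜ := by
    rw [interior_compl]
    exact fun hc => hqt (interior_subset (hclosure q hqs hc))
  obtain ⟨r, -, hrt, hrt'⟩ := hs _ _ isOpen_interior isOpen_interior hcover
    ⟨p, hps, hclosure p hps (subset_closure hpt)⟩ ⟨q, hqs, hq⟩
  exact interior_subset hrt' (interior_subset hrt)

theorem frontier_iUnion_subset_of_finite {ι : Type*} [Finite ι] (f : ι → Set X) :
    frontier (⋃ i, f i) ⊆ ⋃ i, frontier (f i) := by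
  rintro x ⟨hx, hx'⟩
  obtain ⟨i, hi⟩ := mem_iUnion.1 (closure_iUnion_of_finite f ▸ hx)
  exact mem_iUnion.2 ⟨i, hi, fun h => hx' (interior_mono (subset_iUnion f i) h)⟩

theorem frontier_iInter_subset_of_finite {ι : Type*} [Finite ι] (f : ι → Set X) :
    frontier (⋂ i, f i) ⊆ ⋃ i, frontier (f i) := by
  rw [← frontier_compl, compl_iInter]
  simpa only [frontier_compl] using frontier_iUnion_subset_of_finite fun i => (f i)ᶜ

end Frontier

section BooleanCombination

variable {X ι : Type*}

def booleanAtom (D : ι → Set X) (e : ι → Bool) : Set X :=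
  ⋂ i, cond (e i) (D i) (D i)ᶜ

theorem booleanAtom_subset_of_eq_true {D : ι → Set X} {e : ι → Bool} {i : ι} (h : e i = true) :
    booleanAtom D e ⊆ D i := fun _ hp => by
  simpa [h] using mem_iInter.1 hp i

theorem booleanAtom_of_forall_eq_false {D : ι → Set X} {e : ι → Bool} (h : ∀ i, e i = false) :
    booleanAtom D e = (⋃ i, D i)ᶜ := by
  simp [booleanAtom, h, compl_iUnion]

theorem frontier_biUnion_booleanAtom_subset [TopologicalSpace X] [Finite ι] (D : ι → Set X)
    (S : Set (ι → Bool)) : frontier (⋃ e ∈ S, booleanAtom D e) ⊆ ⋃ i, frontier (D i) := by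
  rw [biUnion_eq_iUnion]
  refine (frontier_iUnion_subset_of_finite _).trans (iUnion_subset fun e => ?_)
  refine (frontier_iInter_subset_of_finite _).trans (iUnion_mono fun i => ?_)
  cases e.1 i <;> simp [frontier_compl]

theorem biUnion_booleanAtom_subset_iUnion {E : Type*} [NormedAddCommGroup E] [NormedSpace ℝ E]
    [Nontrivial E] [Finite ι] {D : ι → Set E} {S : Set (ι → Bool)}
    (hD : ∀ i, Bornology.IsBounded (D i))
    (hA : Bornology.IsBounded (⋃ e ∈ S, booleanAtom D e)) :
    ⋃ e ∈ S, booleanAtom D e ⊆ ⋃ i, D i := by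
  refine iUnion₂_subset fun e he => ?_
  by_cases h : ∃ i, e i = true
  · obtain ⟨i, hi⟩ := h
    exact (booleanAtom_subset_of_eq_true hi).trans (subset_iUnion D i)
  · simp only [not_exists, Bool.not_eq_true] at h
    refine absurd ?_ (NormedSpace.unbounded_univ ℝ E)
    refine (hA.union (Bornology.isBounded_iUnion.2 hD)).subset fun p _ => ?_
    by_cases hp : p ∈ ⋃ i, D i
    · exact Or.inr hp
    · exact Or.inl (mem_biUnion he (by rwa [booleanAtom_of_forall_eq_false h, mem_compl_iff]))

end BooleanCombination

theorem thickening_sphere_subset {X : Type*} [PseudoMetricSpace X] (x : X) (ρ δ : ℝ) :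
    thickening δ (sphere x ρ) ⊆ closedBall x (ρ + δ) \ closedBall x (ρ - δ) := by
  intro p hp
  obtain ⟨q, hq, hpq⟩ := mem_thickening_iff.1 hp
  rw [mem_sphere] at hq
  have h₁ := dist_triangle p q x
  have h₂ := dist_triangle_left q x p
  exact ⟨mem_closedBall.2 (by linarith), fun h => by linarith [mem_closedBall.1 h]⟩

section Thickening

variable {E : Type*} [NormedAddCommGroup E] [NormedSpace ℝ E]

theorem thickening_image_segment_subset {c u : E} (hu : ‖u‖ = 1) {ℓ δ : ℝ} (hδ : 0 < δ) :
    thickening δ ((fun t : ℝ => c + t • u) '' Icc 0 ℓ) ⊆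
      ⋃ k ∈ Finset.range (⌈ℓ / δ⌉₊ + 1), closedBall (c + ((k : ℝ) * δ) • u) (2 * δ) := by
  intro p hp
  obtain ⟨_, ⟨t, ⟨ht₀, htℓ⟩, rfl⟩, hpq⟩ := mem_thickening_iff.1 hp
  set k := ⌊t / δ⌋₊
  have hk : (k : ℝ) * δ ≤ t := (le_div_iff₀ hδ).1 (Nat.floor_le (div_nonneg ht₀ hδ.le))
  have hk' : t < (k : ℝ) * δ + δ := by
    have := (div_lt_iff₀ hδ).1 (Nat.lt_floor_add_one (t / δ))
    linarith
  have hkK : k ≤ ⌈ℓ / δ⌉₊ :=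
    (Nat.floor_mono (div_le_div_of_nonneg_right htℓ hδ.le)).trans (Nat.floor_le_ceil _)
  refine mem_biUnion (Finset.mem_range.2 (Nat.lt_succ_of_le hkK)) (mem_closedBall.2 ?_)
  have hdist : dist (c + t • u) (c + ((k : ℝ) * δ) • u) = |t - k * δ| := by
    rw [dist_add_left, dist_eq_norm, ← sub_smul, norm_smul, hu, mul_one, Real.norm_eq_abs]
  calc dist p (c + ((k : ℝ) * δ) • u)
      ≤ dist p (c + t • u) + dist (c + t • u) (c + ((k : ℝ) * δ) • u) := dist_triangle _ _ _
    _ ≤ δ + δ := by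
      rw [hdist, abs_of_nonneg (by linarith)]
      linarith
    _ = 2 * δ := by ring

variable [FiniteDimensional ℝ E] [MeasurableSpace E] [BorelSpace E] (μ : Measure E)
  [μ.IsAddHaarMeasure]

theorem measure_thickening_sphere_le (hE : finrank ℝ E = 2) (x : E) {ρ δ : ℝ} (hρ : 0 ≤ ρ)
    (hδ : 0 < δ) :
    μ (thickening δ (sphere x ρ)) ≤ ENNReal.ofReal (4 * (ρ * δ + δ ^ 2)) * μ (ball 0 1) := by
  refine (measure_mono (thickening_sphere_subset x ρ δ)).trans ?_
  rcases le_or_gt δ ρ with hδρ | hρδ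
  · rw [measure_sdiff (closedBall_subset_closedBall (by linarith))
      measurableSet_closedBall.nullMeasurableSet measure_closedBall_lt_top.ne,
      Measure.addHaar_closedBall μ x (by linarith), Measure.addHaar_closedBall μ x (by linarith),
      hE, tsub_le_iff_right, ← add_mul, ← ENNReal.ofReal_add (by positivity) (by positivity)]
    gcongr
    nlinarith
  · grw [sdiff_subset, Measure.addHaar_closedBall μ x (by linarith), hE]
    gcongr
    nlinarith

theorem measure_thickening_image_segment_le (hE : finrank ℝ E = 2) {c u : E} (hu : ‖u‖ = 1)
    {ℓ δ : ℝ} (hℓ : 0 ≤ ℓ) (hδ : 0 < δ) :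
    μ (thickening δ ((fun t : ℝ => c + t • u) '' Icc 0 ℓ)) ≤
      ENNReal.ofReal (4 * (ℓ * δ + 2 * δ ^ 2)) * μ (ball 0 1) := by
  have hcount : ((⌈ℓ / δ⌉₊ + 1 : ℕ) : ℝ) ≤ ℓ / δ + 2 := by
    push_cast
    linarith [Nat.ceil_lt_add_one (div_nonneg hℓ hδ.le)]
  calc μ (thickening δ ((fun t : ℝ => c + t • u) '' Icc 0 ℓ))
      ≤ ∑ k ∈ Finset.range (⌈ℓ / δ⌉₊ + 1), μ (closedBall (c + ((k : ℝ) * δ) • u) (2 * δ)) :=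
        (measure_mono (thickening_image_segment_subset hu hδ)).trans
          (measure_biUnion_finset_le _ _)
    _ = ((⌈ℓ / δ⌉₊ + 1 : ℕ) : ℝ≥0∞) * (ENNReal.ofReal ((2 * δ) ^ 2) * μ (ball 0 1)) := by
        simp_rw [Measure.addHaar_closedBall μ _ (by positivity : (0 : ℝ) ≤ 2 * δ), hE,
          Finset.sum_const, Finset.card_range, nsmul_eq_mul]
    _ = ENNReal.ofReal (((⌈ℓ / δ⌉₊ + 1 : ℕ) : ℝ) * (2 * δ) ^ 2) * μ (ball 0 1) := by
        rw [← mul_assoc, ENNReal.ofReal_mul (by positivity), ENNReal.ofReal_natCast]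
    _ ≤ ENNReal.ofReal ((ℓ / δ + 2) * (2 * δ) ^ 2) * μ (ball 0 1) := by gcongr
    _ = ENNReal.ofReal (4 * (ℓ * δ + 2 * δ ^ 2)) * μ (ball 0 1) := by
        congr 2
        field_simp
        ring

end Thickening

section Halfdisk

variable {E : Type*} [NormedAddCommGroup E] [InnerProductSpace ℝ E]

theorem exists_norm_eq_one_forall_inner_eq_zero (hE : finrank ℝ E = 2) {v : E} (hv : v ≠ 0) :
    ∃ u : E, ‖u‖ = 1 ∧ ∀ q : E, inner ℝ v q = 0 → ∃ t : ℝ, q = t • u := by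
  have : Fact (finrank ℝ E = 1 + 1) := ⟨hE⟩
  obtain ⟨w, hw, hspan⟩ :=
    finrank_eq_one_iff'.1 (Submodule.finrank_orthogonal_span_singleton (𝕜 := ℝ) hv)
  have hw' : (w : E) ≠ 0 := by simpa using hw
  refine ⟨‖(w : E)‖⁻¹ • (w : E), norm_smul_inv_norm hw', fun q hq => ?_⟩
  obtain ⟨c, hc⟩ := hspan ⟨q, Submodule.mem_orthogonal_singleton_iff_inner_right.2 hq⟩
  refine ⟨c * ‖(w : E)‖, ?_⟩
  rw [smul_smul, mul_assoc, mul_inv_cancel₀ (norm_ne_zero_iff.2 hw'), mul_one]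
  exact (congrArg Subtype.val hc).symm

theorem exists_hyperplane_inter_closedBall_subset_image (hE : finrank ℝ E = 2) (x : E) {v : E}
    (hv : v ≠ 0) (ρ : ℝ) : ∃ u : E, ‖u‖ = 1 ∧
      {p | inner ℝ v (p - x) = 0} ∩ closedBall x ρ ⊆
        (fun t : ℝ => (x - ρ • u) + t • u) '' Icc 0 (2 * ρ) := by
  obtain ⟨u, hu, hline⟩ := exists_norm_eq_one_forall_inner_eq_zero hE hv
  refine ⟨u, hu, fun p ⟨hp, hpx⟩ => ?_⟩
  obtain ⟨t, ht⟩ := hline (p - x) hp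
  have htρ : |t| ≤ ρ := by
    rwa [mem_closedBall, dist_eq_norm, ht, norm_smul, hu, mul_one, Real.norm_eq_abs] at hpx
  refine ⟨t + ρ, ⟨by linarith [neg_abs_le t], by linarith [le_abs_self t]⟩, ?_⟩
  simp only [add_smul, ← ht]
  abel

theorem frontier_closedBall_inter_halfspace_subset (x v : E) (ρ : ℝ) :
    frontier (closedBall x ρ ∩ {p | inner ℝ v (p - x) ≤ 0}) ⊆
      sphere x ρ ∪ ({p | inner ℝ v (p - x) = 0} ∩ closedBall x ρ) := by
  have hcont : Continuous fun p : E => inner ℝ v (p - x) := by fun_prop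
  refine (frontier_inter_subset _ _).trans (union_subset_union
    (inter_subset_left.trans frontier_closedBall_subset_sphere) ?_)
  rw [isClosed_closedBall.closure_eq, inter_comm]
  exact inter_subset_inter_left _ (frontier_le_subset_eq hcont continuous_const)

variable [FiniteDimensional ℝ E] [MeasurableSpace E] [BorelSpace E] (μ : Measure E)
  [μ.IsAddHaarMeasure]

theorem measure_thickening_hyperplane_inter_closedBall_le (hE : finrank ℝ E = 2) (x : E) {v : E}
    (hv : v ≠ 0) {ρ δ : ℝ} (hρ : 0 ≤ ρ) (hδ : 0 < δ) :
    μ (thickening δ ({p | inner ℝ v (p - x) = 0} ∩ closedBall x ρ)) ≤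
      ENNReal.ofReal (8 * (ρ * δ + δ ^ 2)) * μ (ball 0 1) := by
  obtain ⟨u, hu, hsub⟩ := exists_hyperplane_inter_closedBall_subset_image hE x hv ρ
  calc _ ≤ _ := measure_mono (thickening_subset_of_subset δ hsub)
    _ ≤ _ := measure_thickening_image_segment_le μ hE hu (by positivity) hδ
    _ = _ := by ring_nf

theorem measure_thickening_frontier_halfdisk_le (hE : finrank ℝ E = 2) (x : E) {v : E}
    (hv : v ≠ 0) {ρ δ : ℝ} (hρ : 0 ≤ ρ) (hδ : 0 < δ) :
    μ (thickening δ (frontier (closedBall x ρ ∩ {p | inner ℝ v (p - x) ≤ 0}))) ≤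
      ENNReal.ofReal (12 * (ρ * δ + δ ^ 2)) * μ (ball 0 1) := by
  calc _ ≤ μ (thickening δ (sphere x ρ) ∪
          thickening δ ({p | inner ℝ v (p - x) = 0} ∩ closedBall x ρ)) := by
        rw [← thickening_union]
        exact measure_mono (thickening_subset_of_subset δ
          (frontier_closedBall_inter_halfspace_subset x v ρ))
    _ ≤ ENNReal.ofReal (4 * (ρ * δ + δ ^ 2)) * μ (ball 0 1) +
          ENNReal.ofReal (8 * (ρ * δ + δ ^ 2)) * μ (ball 0 1) :=
        (measure_union_le _ _).trans (add_le_add (measure_thickening_sphere_le μ hE x hρ hδ)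
          (measure_thickening_hyperplane_inter_closedBall_le μ hE x hv hρ hδ))
    _ = _ := by
        rw [← add_mul, ← ENNReal.ofReal_add (by positivity) (by positivity)]
        ring_nf

end Halfdisk

namespace IsHalfdisk

variable {ρ : ℝ} {D : Set Plane}

theorem isBounded (hD : IsHalfdisk ρ D) : Bornology.IsBounded D := by
  obtain ⟨x, r, v, -, -, -, rfl⟩ := hD
  exact isBounded_closedBall.subset inter_subset_left

theorem volume_le (hD : IsHalfdisk ρ D) :
    volume D ≤ ENNReal.ofReal (ρ ^ 2) * volume (ball (0 : Plane) 1) := by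
  obtain ⟨x, r, v, hr, hrρ, -, rfl⟩ := hD
  grw [inter_subset_left, closedBall_subset_closedBall hrρ,
    Measure.addHaar_closedBall volume x (hr.trans hrρ), finrank_euclideanSpace_fin]

theorem volume_thickening_frontier_le (hD : IsHalfdisk ρ D) {δ : ℝ} (hδ : 0 < δ) :
    volume (thickening δ (frontier D)) ≤
      ENNReal.ofReal (12 * (ρ * δ + δ ^ 2)) * volume (ball (0 : Plane) 1) := by
  obtain ⟨x, r, v, hr, hrρ, hv, rfl⟩ := hD
  grw [measure_thickening_frontier_halfdisk_le volume finrank_euclideanSpace_fin x hv hr hδ, hrρ]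

end IsHalfdisk

theorem convex_cell (m i j : ℕ) : Convex ℝ (cell m i j) :=
  ((convex_Icc _ _).linear_preimage (EuclideanSpace.proj 0 : Plane →L[ℝ] ℝ).toLinearMap).inter
    ((convex_Icc _ _).linear_preimage (EuclideanSpace.proj 1 : Plane →L[ℝ] ℝ).toLinearMap)

theorem exists_mem_Icc_div {m : ℕ} (hm : 0 < m) {x : ℝ} (hx : x ∈ Icc (0 : ℝ) 1) :
    ∃ i < m, x ∈ Icc ((i : ℝ) / m) ((i + 1 : ℕ) / m) := by
  have hm' : (0 : ℝ) < m := Nat.cast_pos.2 hm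
  refine ⟨min ⌊m * x⌋₊ (m - 1), by omega, ?_, ?_⟩
  · rw [div_le_iff₀ hm', mul_comm x]
    exact (Nat.cast_le.2 (min_le_left _ _)).trans (Nat.floor_le (by positivity [hx.1]))
  · rcases le_total ⌊m * x⌋₊ (m - 1) with h | h
    · rw [min_eq_left h, le_div_iff₀ hm', mul_comm x]
      exact_mod_cast (Nat.lt_floor_add_one _).le
    · rw [min_eq_right h, Nat.sub_add_cancel hm, div_self hm'.ne']
      exact hx.2

theorem exists_mem_cell {m : ℕ} (hm : 0 < m) {p : Plane} (hp : p ∈ unitSquare) :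
    ∃ i < m, ∃ j < m, p ∈ cell m i j := by
  obtain ⟨i, hi, hpi⟩ := exists_mem_Icc_div hm hp.1
  obtain ⟨j, hj, hpj⟩ := exists_mem_Icc_div hm hp.2
  exact ⟨i, hi, j, hj, hpi, hpj⟩

theorem dist_lt_of_mem_cell {m i j : ℕ} (hm : 0 < m) {p q : Plane} (hp : p ∈ cell m i j)
    (hq : q ∈ cell m i j) : dist p q < 2 / m := by
  have hside : ∀ a : ℕ, ((a + 1 : ℕ) : ℝ) / m - a / m = 1 / m := fun a => by
    push_cast
    ring
  have h₀ := (Real.dist_le_of_mem_Icc hp.1 hq.1).trans_eq (hside i)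
  have h₁ := (Real.dist_le_of_mem_Icc hp.2 hq.2).trans_eq (hside j)
  have hsq : (2 / m : ℝ) ^ 2 = 4 * (1 / m) ^ 2 := by ring
  rw [EuclideanSpace.dist_eq, Fin.sum_univ_two, Real.sqrt_lt' (by positivity), hsq]
  linarith [pow_le_pow_left₀ dist_nonneg h₀ 2, pow_le_pow_left₀ dist_nonneg h₁ 2,
    pow_pos (by positivity : (0 : ℝ) < 1 / m) 2]

theorem diff_innerCells_subset_thickening_frontier {m : ℕ} (hm : 0 < m) {A : Set Plane}
    (hA : A ⊆ unitSquare) : A \ innerCells m A ⊆ thickening (2 / m) (frontier A) := by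
  rintro p ⟨hpA, hpA'⟩
  obtain ⟨i, hi, j, hj, hpc⟩ := exists_mem_cell hm (hA hpA)
  have hcA : ¬cell m i j ⊆ A := fun hc => hpA' <| by
    simp only [innerCells, mem_iUnion]
    exact ⟨i, Finset.mem_range.2 hi, j, Finset.mem_range.2 hj, hc, hpc⟩
  obtain ⟨r, hrc, hrA⟩ := (convex_cell m i j).isPreconnected.inter_frontier_nonempty
    ⟨p, hpc, hpA⟩ (not_subset.1 hcA)
  exact mem_thickening_iff.2 ⟨r, hrA, dist_lt_of_mem_cell hm hpc hrc⟩

theorem MeasureTheory.measure_iUnion_le_card_mul {α ι : Type*} [MeasurableSpace α] [Fintype ι]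
    (μ : Measure α) {s : ι → Set α} {c : ℝ≥0∞} (h : ∀ i, μ (s i) ≤ c) :
    μ (⋃ i, s i) ≤ Fintype.card ι * c :=
  (measure_iUnion_fintype_le μ s).trans
    ((Finset.sum_le_card_nsmul _ _ _ fun i _ => h i).trans_eq (by simp [nsmul_eq_mul]))

theorem ENNReal.natCast_mul_ofReal_mul_le {k : ℕ} {a b : ℝ} (h : k * a ≤ b)
    (c : ℝ≥0∞) : (k : ℝ≥0∞) * (ENNReal.ofReal a * c) ≤ ENNReal.ofReal b * c := by
  rw [← mul_assoc, ← ENNReal.ofReal_natCast, ← ENNReal.ofReal_mul (Nat.cast_nonneg k)]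
  gcongr

theorem isBounded_unitSquare : Bornology.IsBounded unitSquare := by
  refine (isBounded_closedBall (x := (0 : Plane)) (r := 2)).subset fun p hp => ?_
  obtain ⟨⟨h₀, h₀'⟩, h₁, h₁'⟩ := hp
  rw [mem_closedBall, dist_zero_right, EuclideanSpace.norm_eq, Fin.sum_univ_two,
    Real.sqrt_le_left (by norm_num)]
  simp only [Real.norm_eq_abs, sq_abs]
  nlinarith

section BooleanCombinationOfHalfdisks

variable {ι : Type*} [Fintype ι] {ρ : ℝ} {D : ι → Set Plane} {S : Set (ι → Bool)}
  {A : Set Plane}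

theorem volume_le_of_isHalfdisk (hD : ∀ i, IsHalfdisk ρ (D i))
    (hA : A = ⋃ e ∈ S, booleanAtom D e) (hAsq : A ⊆ unitSquare) :
    volume A ≤ Fintype.card ι * (ENNReal.ofReal (ρ ^ 2) * volume (ball (0 : Plane) 1)) := by
  subst hA
  have hsub := biUnion_booleanAtom_subset_iUnion (fun i => (hD i).isBounded)
    (isBounded_unitSquare.subset hAsq)
  exact (measure_mono hsub).trans (measure_iUnion_le_card_mul _ fun i => (hD i).volume_le)

theorem volume_diff_innerCells_le (hD : ∀ i, IsHalfdisk ρ (D i))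
    (hA : A = ⋃ e ∈ S, booleanAtom D e) (hAsq : A ⊆ unitSquare) {m : ℕ} (hm : 0 < m) :
    volume (A \ innerCells m A) ≤ Fintype.card ι *
      (ENNReal.ofReal (12 * (ρ * (2 / m) + (2 / m) ^ 2)) * volume (ball (0 : Plane) 1)) := by
  have hfr : frontier A ⊆ ⋃ i, frontier (D i) := hA ▸ frontier_biUnion_booleanAtom_subset D S
  calc volume (A \ innerCells m A) ≤ volume (⋃ i, thickening (2 / m) (frontier (D i))) := by
        rw [← thickening_iUnion]
        exact measure_mono ((diff_innerCells_subset_thickening_frontier hm hAsq).trans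
          (thickening_subset_of_subset _ hfr))
    _ ≤ _ := measure_iUnion_le_card_mul _ fun i =>
        (hD i).volume_thickening_frontier_le (by positivity)

end BooleanCombinationOfHalfdisks

theorem one_le_mul_mOf {η : ℝ} (hη : 0 < η) {n : ℕ} (hn : 2 ≤ n) :
    1 ≤ η * √(log n / n) * mOf η n := by
  have hlog : 0 < log n := log_pos (by exact_mod_cast hn)
  have hprod : η * √(log n / n) * √(n / (η ^ 2 * log n)) = 1 := by
    have hsq : log n / n * (n / (η ^ 2 * log n)) = η⁻¹ ^ 2 := by field_simp
    rw [mul_assoc, ← Real.sqrt_mul (by positivity), hsq, Real.sqrt_sq (by positivity),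
      mul_inv_cancel₀ hη.ne']
  calc 1 = η * √(log n / n) * √(n / (η ^ 2 * log n)) := hprod.symm
    _ ≤ η * √(log n / n) * mOf η n := by
      gcongr
      exact Nat.le_ceil _

theorem volume_diff_innerCells_mOf_le {η : ℝ} (hη : 0 < η) {n : ℕ} (hn : 2 ≤ n) {k : ℕ}
    (hk : k ≤ 1000) {D : Fin k → Set Plane} (hD : ∀ i, IsHalfdisk (1000 * √(log n / n)) (D i))
    {S : Set (Fin k → Bool)} {A : Set Plane} (hA : A = ⋃ e ∈ S, booleanAtom D e)
    (hAsq : A ⊆ unitSquare) :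
    volume (A \ innerCells (mOf η n) A) ≤
      ENNReal.ofReal (10 ^ 9 * η * (log n / n)) * volume (ball (0 : Plane) 1) := by
  have hm := one_le_mul_mOf hη hn
  have hL : log n / n = √(log n / n) ^ 2 := (Real.sq_sqrt (by positivity)).symm
  set s := √(log n / n)
  have hs : 0 < s := Real.sqrt_pos.2 (div_pos (log_pos (by exact_mod_cast hn)) (by positivity))
  have hm_pos : 0 < mOf η n := Nat.pos_of_ne_zero fun h => by norm_num [h] at hm
  have hk' : (k : ℝ) ≤ 1000 := by exact_mod_cast hk
  rw [hL]
  rcases le_or_gt η 1 with hη1 | hη1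
  · refine (volume_diff_innerCells_le hD hA hAsq hm_pos).trans ?_
    rw [Fintype.card_fin]
    refine ENNReal.natCast_mul_ofReal_mul_le ?_ _
    have hδ : (2 : ℝ) / mOf η n ≤ 2 * η * s := by
      rw [div_le_iff₀ (by exact_mod_cast hm_pos)]
      linarith
    have hδ₀ : (0 : ℝ) < 2 / mOf η n := by positivity
    generalize (2 : ℝ) / mOf η n = δ at hδ hδ₀ ⊢
    have hδ' : δ ^ 2 ≤ 4 * η * s ^ 2 := by nlinarith [mul_le_mul hδ hδ hδ₀.le (by positivity)]
    have hbound : 12 * (1000 * s * δ + δ ^ 2) ≤ 10 ^ 6 * η * s ^ 2 := by nlinarith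
    nlinarith
  · refine (measure_mono sdiff_subset).trans ((volume_le_of_isHalfdisk hD hA hAsq).trans ?_)
    rw [Fintype.card_fin]
    refine ENNReal.natCast_mul_ofReal_mul_le ?_ _
    nlinarith [sq_nonneg s]

/-- There is a universal constant `C > 0` such that for every `η > 0`
there is `N` with: for all `n ≥ N`, if `A ⊆ [0,1]²` is a Boolean combination of at most
`1000` halfdisks of radius at most `1000 √(ln n / n)`, and `A'` is the union of the cells of
`D(m_n)` contained in `A`, then `area(A') ≥ area(A) − C η (ln n / n)`. -/
theorem boolean_combination_inner_cells_area :
    ∃ C : ℝ, 0 < C ∧ ∀ η : ℝ, 0 < η → ∃ N : ℕ, ∀ n : ℕ, N ≤ n →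
      ∀ (k : ℕ), k ≤ 1000 → ∀ (D : Fin k → Set Plane),
        (∀ i, IsHalfdisk (1000 * Real.sqrt (Real.log n / n)) (D i)) →
        ∀ (S : Set (Fin k → Bool)) (A : Set Plane),
          A = ⋃ e ∈ S, ⋂ i, cond (e i) (D i) (D i)ᶜ →
          A ⊆ unitSquare →
          volume A ≤ volume (innerCells (mOf η n) A)
            + ENNReal.ofReal (C * η * (Real.log n / n)) := by
  obtain ⟨c, hc, hκ⟩ : ∃ c : ℝ, 0 < c ∧ volume (ball (0 : Plane) 1) = ENNReal.ofReal c :=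
    ⟨_, ENNReal.toReal_pos (measure_ball_pos _ _ one_pos).ne' measure_ball_lt_top.ne,
      (ENNReal.ofReal_toReal measure_ball_lt_top.ne).symm⟩
  refine ⟨10 ^ 9 * c, by positivity, fun η hη => ⟨2, fun n hn k hk D hD S A hA hAsq => ?_⟩⟩
  have hlog : 0 ≤ log n / n := div_nonneg (log_natCast_nonneg n) n.cast_nonneg
  refine tsub_le_iff_left.1 (le_measure_sdiff.trans
    ((volume_diff_innerCells_mOf_le hη hn hk hD hA hAsq).trans_eq ?_))
  rw [hκ, ← ENNReal.ofReal_mul (mul_nonneg (by positivity) hlog)]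
  ring_nf
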